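/- Suppose ∇f is L₁-Lipschitz on E with L₁ > 0, the Hessian map x ↦ ∇²f(x) is L₂-Lipschitz in operator norm with L₂ > 0, the Luo–Tseng error bound holds, the IRPN iteration hypotheses hold, and ρ ∈ [0,1). Then there exists an integer k₀ ≥ 0 such that α_k = 1 for all k ≥ k₀. -/

import Mathlib

/-!
Armijo's test accepts every step size `t ≤ 1` with `2 (1 - ζ) L₁ t ≤ (1 - θ) μ_k`, so backtracking
never returns a step much smaller than `μ_k`. Each accepted step decreases `F` by a fixed multiple of
`α_k μ_k ‖d^k‖²`, so these quantities are summable, and since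
`(1 - η) r(x^k) ≤ (2 + L₁ + μ_k) ‖d^k‖` this forces `r(x^k) → 0`.

Near the solution set the Luo–Tseng bound provides a minimizer `x̄` with `‖x^k - x̄‖ = O(r(x^k))`.
Monotonicity of the subdifferential of `g`, applied to the prox step defining the subproblem residual
and to the optimality of `x̄`, then gives `μ_k ‖d^k‖ = O(r(x^k)^(1+ρ))`. As `μ_k² = c² r(x^k)^(2ρ)`
and `ρ < 1`, eventually `2 L₂ ‖d^k‖ ≤ μ_k`, and the cubic Taylor bound shows that the unit step then
passes Armijo's test.
-/

open Filter
open scoped RealInnerProductSpace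

abbrev E (n : ℕ) := EuclideanSpace ℝ (Fin n)

open Set Topology

theorem HasDerivAt.nonneg_of_le_on_Ioc {h : ℝ → ℝ} {h' : ℝ} (hd : HasDerivAt h h' 0)
    (hle : ∀ t ∈ Ioc (0 : ℝ) 1, h 0 ≤ h t) : 0 ≤ h' := by
  refine ge_of_tendsto ((hasDerivAt_iff_tendsto_slope.1 hd).mono_left
    (nhdsWithin_mono (0 : ℝ) fun t (ht : t ∈ Ioi 0) ↦ ht.ne')) ?_
  filter_upwards [Ioc_mem_nhdsGT zero_lt_one] with t ht
  rw [slope_def_field, sub_zero]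
  exact div_nonneg (sub_nonneg.2 (hle t ht)) ht.1.le

theorem ConvexOn.apply_add_smul_le {V : Type*} [AddCommGroup V] [Module ℝ V] {f : V → ℝ}
    (hf : ConvexOn ℝ univ f) (x d : V) {t : ℝ} (ht₀ : 0 ≤ t) (ht₁ : t ≤ 1) :
    f (x + t • d) ≤ f x + t * (f (x + d) - f x) :=
  calc f (x + t • d) = f ((1 - t) • x + t • (x + d)) := by congr 1; module
    _ ≤ (1 - t) • f x + t • f (x + d) :=
      hf.2 (mem_univ x) (mem_univ (x + d)) (sub_nonneg.2 ht₁) ht₀ (sub_add_cancel 1 t)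
    _ = f x + t * (f (x + d) - f x) := by simp only [smul_eq_mul]; ring

theorem pow_eq_one_or_mul_lt_pow {P : ℝ → Prop} {β τ : ℝ} (hβ₀ : 0 < β) (hβ₁ : β ≤ 1)
    (hP : ∀ t ∈ Ioc 0 1, t ≤ τ → P t) {i : ℕ} (hi : ∀ j < i, ¬ P (β ^ j)) :
    β ^ i = 1 ∨ β * τ < β ^ i := by
  rcases i with _ | j
  · exact .inl (pow_zero β)
  · refine .inr ?_
    have hτ : τ < β ^ j := not_le.1 fun h ↦
      hi j j.lt_succ_self (hP _ ⟨pow_pos hβ₀ j, pow_le_one₀ hβ₀.le hβ₁⟩ h)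
    rw [pow_succ']
    exact mul_lt_mul_of_pos_left hτ hβ₀

theorem tendsto_zero_of_le_mul_sub_succ {u a : ℕ → ℝ} {C m : ℝ} (ha : ∀ k, 0 ≤ a k)
    (hC : 0 ≤ C) (hle : ∀ k, a k ≤ C * (u k - u (k + 1))) (hm : ∀ k, m ≤ u k) :
    Tendsto a atTop (𝓝 0) :=
  Summable.tendsto_atTop_zero <| summable_of_sum_range_le ha fun n ↦
    calc ∑ k ∈ Finset.range n, a k ≤ ∑ k ∈ Finset.range n, C * (u k - u (k + 1)) :=
          Finset.sum_le_sum fun k _ ↦ hle k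
      _ = C * (u 0 - u n) := by rw [← Finset.mul_sum, Finset.sum_range_sub']
      _ ≤ C * (u 0 - m) := by gcongr; exact hm n

theorem exists_pos_le_mul_rpow_mul_sq {A c η ρ a : ℝ} (hA : 0 < A) (hc : 0 < c) (hη : η < 1)
    (hρ₀ : 0 ≤ ρ) (hρ₂ : ρ ≤ 2) (ha : 0 < a) :
    ∃ b > 0, ∀ t s, a ≤ t → 0 ≤ s → (1 - η) * t ≤ (A + c * t ^ ρ) * s →
      b ≤ c * t ^ ρ * s ^ 2 := by
  have hη' : 0 < 1 - η := sub_pos.2 hη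
  have ha₁ := Real.rpow_pos_of_pos ha ρ
  have ha₂ := Real.rpow_pos_of_pos ha (2 - ρ)
  refine ⟨min (c * a ^ ρ * ((1 - η) * a / (2 * A)) ^ 2) ((1 - η) ^ 2 * a ^ (2 - ρ) / (4 * c)),
    lt_min (by positivity) (by positivity), fun t s hat hs hres ↦ ?_⟩
  have ht : 0 < t := ha.trans_le hat
  have htρ := Real.rpow_pos_of_pos ht ρ
  rcases le_total (c * t ^ ρ) A with hμA | hAμ
  · refine (min_le_left _ _).trans ?_
    have hs' : (1 - η) * a / (2 * A) ≤ s := by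
      rw [div_le_iff₀ (by positivity)]; nlinarith
    have := Real.rpow_le_rpow ha.le hat hρ₀
    gcongr
  · refine (min_le_right _ _).trans ?_
    rw [div_le_iff₀ (by positivity)]
    have hsq : ((1 - η) * t) ^ 2 ≤ (2 * (c * t ^ ρ) * s) ^ 2 :=
      pow_le_pow_left₀ (by positivity) (by nlinarith) 2
    have htpow : t ^ 2 = t ^ ρ * t ^ (2 - ρ) := by
      rw [← Real.rpow_natCast, ← Real.rpow_add ht]; norm_num
    have hcancel : t ^ ρ * ((1 - η) ^ 2 * t ^ (2 - ρ)) ≤ t ^ ρ * (c * t ^ ρ * s ^ 2 * (4 * c)) := by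
      nlinarith
    have := Real.rpow_le_rpow ha.le hat (sub_nonneg.2 hρ₂)
    have := le_of_mul_le_mul_left hcancel htρ
    nlinarith

theorem tendsto_zero_of_tendsto_mul_mul_sq {r μ α s : ℕ → ℝ} {A c γ η ρ : ℝ} (hA : 0 < A)
    (hc : 0 < c) (hγ : 0 < γ) (hη : η < 1) (hρ₀ : 0 ≤ ρ) (hρ₂ : ρ ≤ 2) (hr : ∀ k, 0 < r k)
    (hμ : ∀ k, μ k = c * r k ^ ρ) (hs : ∀ k, 0 ≤ s k) (hα : ∀ k, α k = 1 ∨ γ * μ k < α k)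
    (hres : ∀ k, (1 - η) * r k ≤ (A + μ k) * s k)
    (hlim : Tendsto (fun k ↦ α k * (μ k * s k ^ 2)) atTop (𝓝 0)) : Tendsto r atTop (𝓝 0) := by
  refine tendsto_order.2 ⟨fun a ha ↦ .of_forall fun k ↦ ha.trans (hr k), fun a ha ↦ ?_⟩
  obtain ⟨b, hb, hbound⟩ := exists_pos_le_mul_rpow_mul_sq hA hc hη hρ₀ hρ₂ ha
  have hαa : 0 < min 1 (γ * (c * a ^ ρ)) :=
    lt_min one_pos (by have := Real.rpow_pos_of_pos ha ρ; positivity)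
  filter_upwards [hlim.eventually (gt_mem_nhds (mul_pos hαa hb))] with k hk
  by_contra! hak
  have hαk : min 1 (γ * (c * a ^ ρ)) ≤ α k := by
    rcases hα k with h | h
    · exact h ▸ min_le_left _ _
    · refine (min_le_right _ _).trans (le_trans ?_ h.le)
      rw [hμ]
      gcongr
  have := hbound _ _ hak (hs k) (hμ k ▸ hres k)
  rw [← hμ] at this
  nlinarith

theorem two_mul_le_of_mul_le_rpow {μ s c r ρ C L : ℝ} (hr : 0 < r) (hc : 0 < c) (hL : 0 ≤ L)
    (hμ : μ = c * r ^ ρ) (hs : μ * s ≤ C * r ^ (1 + ρ)) (hsmall : 2 * L * C * r ^ (1 - ρ) ≤ c ^ 2) :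
    2 * L * s ≤ μ := by
  have hμpos : 0 < μ := hμ ▸ mul_pos hc (Real.rpow_pos_of_pos hr ρ)
  refine le_of_mul_le_mul_left ?_ hμpos
  have hsplit : r ^ (1 + ρ) = r ^ (1 - ρ) * (r ^ ρ * r ^ ρ) := by
    rw [← Real.rpow_add hr, ← Real.rpow_add hr]; ring_nf
  calc μ * (2 * L * s) = 2 * L * (μ * s) := by ring
    _ ≤ 2 * L * (C * r ^ (1 + ρ)) := by gcongr
    _ = 2 * L * C * r ^ (1 - ρ) * (r ^ ρ * r ^ ρ) := by rw [hsplit]; ring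
    _ ≤ c ^ 2 * (r ^ ρ * r ^ ρ) := by gcongr
    _ = μ * μ := by rw [hμ]; ring

variable {V : Type*} [NormedAddCommGroup V] [InnerProductSpace ℝ V]
  {f g : V → ℝ} {f' : V → V} {hess : V → V →L[ℝ] V} {prox : V → V}

theorem HasFDerivAt.hasDerivAt_comp_add_smul {W : Type*} [NormedAddCommGroup W]
    [NormedSpace ℝ W] {φ : V → W} {A : V →L[ℝ] W} {x w : V} {t : ℝ}
    (h : HasFDerivAt φ A (x + t • w)) : HasDerivAt (fun s : ℝ ↦ φ (x + s • w)) (A w) t := by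
  simpa [Function.comp_def] using
    h.comp_hasDerivAt t (((hasDerivAt_id t).smul_const w).const_add x)

theorem norm_gradient_sub_sub_hessian_le (hhess : ∀ x, HasFDerivAt f' (hess x) x) {L : ℝ}
    (hL : 0 ≤ L) (hlip : ∀ y z, ‖hess y - hess z‖ ≤ L * ‖y - z‖) (x y : V) :
    ‖f' y - f' x - hess x (y - x)‖ ≤ L * ‖y - x‖ ^ 2 := by
  have := (convex_segment x y).norm_image_sub_le_of_norm_hasFDerivWithin_le'
    (fun z _ ↦ (hhess z).hasFDerivWithinAt) (φ := hess x) (C := L * ‖y - x‖) (fun z hz ↦ ?_)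
    (left_mem_segment ℝ x y) (right_mem_segment ℝ x y)
  · rwa [sq, ← mul_assoc]
  · refine (hlip z x).trans (mul_le_mul_of_nonneg_left ?_ hL)
    rw [segment_eq_image'] at hz
    obtain ⟨s, hs, rfl⟩ := hz
    rw [add_sub_cancel_left, norm_smul, Real.norm_of_nonneg hs.1]
    exact mul_le_of_le_one_left (norm_nonneg _) hs.2

theorem norm_add_smul_id_le (A : V →L[ℝ] V) {μ : ℝ} (hμ : 0 ≤ μ) :
    ‖A + μ • ContinuousLinearMap.id ℝ V‖ ≤ ‖A‖ + μ := by
  refine (norm_add_le _ _).trans ?_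
  gcongr
  refine (norm_smul_le μ (ContinuousLinearMap.id ℝ V)).trans ?_
  rw [Real.norm_of_nonneg hμ]
  exact mul_le_of_le_one_right hμ ContinuousLinearMap.norm_id_le

def IsProximalMap (g : V → ℝ) (prox : V → V) : Prop :=
  ∀ v u, (1/2) * ‖prox v - v‖ ^ 2 + g (prox v) ≤ (1/2) * ‖u - v‖ ^ 2 + g u

def proxResidual (f' : V → V) (prox : V → V) (y : V) : ℝ := ‖y - prox (y - f' y)‖

theorem IsProximalMap.inner_sub_le (hprox : IsProximalMap g prox) (hg : ConvexOn ℝ univ g)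
    (v u : V) : ⟪v - prox v, u - prox v⟫ ≤ g u - g (prox v) := by
  have hd : HasDerivAt (fun t : ℝ ↦ t * (⟪prox v - v, u - prox v⟫ + (g u - g (prox v)))
      + t ^ 2 * (‖u - prox v‖ ^ 2 / 2)) (⟪prox v - v, u - prox v⟫ + (g u - g (prox v))) 0 := by
    simpa using ((hasDerivAt_id (0 : ℝ)).mul_const _).fun_add
      ((hasDerivAt_pow 2 (0 : ℝ)).mul_const _)
  have := hd.nonneg_of_le_on_Ioc fun t ht ↦ by
    have hmin := hprox v (prox v + t • (u - prox v))
    have hconv := hg.apply_add_smul_le (prox v) (u - prox v) ht.1.le ht.2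
    rw [add_sub_cancel] at hconv
    rw [add_sub_right_comm, norm_add_sq_real, inner_smul_right, norm_smul,
      Real.norm_of_nonneg ht.1.le] at hmin
    nlinarith
  rw [← neg_sub (prox v) v, inner_neg_left]
  linarith

theorem IsProximalMap.norm_prox_sub_prox_le (hprox : IsProximalMap g prox) (hg : ConvexOn ℝ univ g)
    (v w : V) : ‖prox v - prox w‖ ≤ ‖v - w‖ := by
  have h₁ := hprox.inner_sub_le hg v (prox w)
  have h₂ := hprox.inner_sub_le hg w (prox v)
  have hmono : ‖prox v - prox w‖ ^ 2 ≤ ⟪v - w, prox v - prox w⟫ := by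
    rw [← neg_sub (prox v) (prox w), inner_neg_right] at h₁
    rw [← real_inner_self_eq_norm_sq]
    have : v - w = (v - prox v) - (w - prox w) + (prox v - prox w) := by abel
    rw [this, inner_add_left, inner_sub_left (v - prox v)]
    linarith
  have := hmono.trans (real_inner_le_norm _ _)
  rw [sq] at this
  rcases (norm_nonneg (prox v - prox w)).eq_or_lt with h | h
  · rw [← h]; exact norm_nonneg _
  · exact le_of_mul_le_mul_right this h

theorem IsProximalMap.one_sub_mul_norm_le (hprox : IsProximalMap g prox)
    (hg : ConvexOn ℝ univ g) {H : V →L[ℝ] V} {K : ℝ} (hH : ‖H‖ ≤ K) {x y v : V} {η : ℝ}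
    (h : ‖y - prox (y - v - H (y - x))‖ ≤ η * ‖x - prox (x - v)‖) :
    (1 - η) * ‖x - prox (x - v)‖ ≤ (2 + K) * ‖y - x‖ := by
  have hnonexp := hprox.norm_prox_sub_prox_le hg (y - v - H (y - x)) (x - v)
  rw [show y - v - H (y - x) - (x - v) = (y - x) - H (y - x) by abel] at hnonexp
  have htri : ‖x - prox (x - v)‖ ≤ ‖y - x‖ + ‖y - prox (y - v - H (y - x))‖
      + ‖prox (y - v - H (y - x)) - prox (x - v)‖ := by
    calc ‖x - prox (x - v)‖ = ‖-(y - x) + (y - prox (y - v - H (y - x)))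
          + (prox (y - v - H (y - x)) - prox (x - v))‖ := by congr 1; abel
      _ ≤ _ := (norm_add₃_le).trans_eq (by rw [norm_neg])
  have := norm_sub_le (y - x) (H (y - x))
  have := (H.le_opNorm (y - x)).trans (mul_le_mul_of_nonneg_right hH (norm_nonneg _))
  nlinarith

def linModel (f g : V → ℝ) (f' : V → V) (x y : V) : ℝ := f x + ⟪f' x, y - x⟫ + g y

noncomputable def quadModel (f g : V → ℝ) (f' : V → V) (H : V →L[ℝ] V) (x y : V) : ℝ :=
  linModel f g f' x y + (1/2) * ⟪H (y - x), y - x⟫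

def ArmijoAccepts (f g : V → ℝ) (f' : V → V) (θ : ℝ) (x d : V) (t : ℝ) : Prop :=
  θ * (linModel f g f' x x - linModel f g f' x (x + t • d)) ≤ (f + g) x - (f + g) (x + t • d)

@[simp] theorem linModel_self (x : V) : linModel f g f' x x = f x + g x := by
  simp [linModel]

@[simp] theorem linModel_add (x d : V) :
    linModel f g f' x (x + d) = f x + ⟪f' x, d⟫ + g (x + d) := by
  simp [linModel]

theorem quadModel_add_sub_quadModel (A : V →L[ℝ] V) (μ : ℝ) (x d : V) :
    quadModel f g f' (A + μ • ContinuousLinearMap.id ℝ V) x (x + d)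
      - quadModel f g f' (A + μ • ContinuousLinearMap.id ℝ V) x x
      = linModel f g f' x (x + d) - linModel f g f' x x + (⟪A d, d⟫ + μ * ‖d‖ ^ 2) / 2 := by
  simp only [quadModel, add_sub_cancel_left, sub_self, map_zero, inner_zero_left, add_apply,
    smul_apply, ContinuousLinearMap.id_apply, inner_add_left, real_inner_smul_left,
    real_inner_self_eq_norm_sq]
  ring

theorem linModel_add_smul_le (hg : ConvexOn ℝ univ g) (x d : V) {t : ℝ} (ht₀ : 0 ≤ t)
    (ht₁ : t ≤ 1) : t * (linModel f g f' x x - linModel f g f' x (x + d))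
      ≤ linModel f g f' x x - linModel f g f' x (x + t • d) := by
  have := hg.apply_add_smul_le x d ht₀ ht₁
  simp only [linModel_self, linModel_add, inner_smul_right]
  nlinarith

theorem mul_norm_sq_le_of_quadModel_sub_le {A H : V →L[ℝ] V} {x d : V} {μ ζ : ℝ}
    (hH : H = A + μ • ContinuousLinearMap.id ℝ V) (hA : 0 ≤ ⟪A d, d⟫)
    (hq : quadModel f g f' H x (x + d) - quadModel f g f' H x x
      ≤ ζ * (linModel f g f' x (x + d) - linModel f g f' x x)) :
    μ * ‖d‖ ^ 2 ≤ 2 * (1 - ζ) * (linModel f g f' x x - linModel f g f' x (x + d)) := by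
  rw [hH, quadModel_add_sub_quadModel] at hq
  linarith

theorem mul_mul_norm_sq_le_of_armijo (hg : ConvexOn ℝ univ g) {x d : V} {μ ζ θ t : ℝ}
    (hθ : 0 < θ) (hζ : ζ ≤ 1)
    (hdec : μ * ‖d‖ ^ 2 ≤ 2 * (1 - ζ) * (linModel f g f' x x - linModel f g f' x (x + d)))
    (ht₀ : 0 ≤ t) (ht₁ : t ≤ 1) (harmijo : ArmijoAccepts f g f' θ x d t) :
    t * (μ * ‖d‖ ^ 2) ≤ 2 * (1 - ζ) / θ * ((f + g) x - (f + g) (x + t • d)) := by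
  have hζ' : 0 ≤ 1 - ζ := sub_nonneg.2 hζ
  calc t * (μ * ‖d‖ ^ 2)
      ≤ 2 * (1 - ζ) * (t * (linModel f g f' x x - linModel f g f' x (x + d))) := by
        nlinarith [mul_le_mul_of_nonneg_left hdec ht₀]
    _ ≤ 2 * (1 - ζ) * (linModel f g f' x x - linModel f g f' x (x + t • d)) := by
        gcongr; exact linModel_add_smul_le hg x d ht₀ ht₁
    _ = 2 * (1 - ζ) / θ * (θ * (linModel f g f' x x - linModel f g f' x (x + t • d))) := by
        field_simp
    _ ≤ _ := by gcongr; exact harmijo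

-- `x k + d k` is the inexact subproblem solution `x̂^{k+1}` and `β ^ i k` the step size `α_k`.
structure IsIRPNSequence (f g : V → ℝ) (f' : V → V) (hess : V → V →L[ℝ] V) (prox : V → V)
    (θ ζ η c ρ β : ℝ) (x d : ℕ → V) (i : ℕ → ℕ) (μ : ℕ → ℝ) (H : ℕ → V →L[ℝ] V) : Prop where
  residual_pos : ∀ k, 0 < proxResidual f' prox (x k)
  mu_eq : ∀ k, μ k = c * proxResidual f' prox (x k) ^ ρ
  H_eq : ∀ k, H k = hess (x k) + μ k • ContinuousLinearMap.id ℝ V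
  inexact_residual : ∀ k, ‖x k + d k - prox (x k + d k - f' (x k) - H k (x k + d k - x k))‖
    ≤ η * min (proxResidual f' prox (x k)) (proxResidual f' prox (x k) ^ (1 + ρ))
  inexact_model : ∀ k,
    quadModel f g f' (H k) (x k) (x k + d k) - quadModel f g f' (H k) (x k) (x k)
      ≤ ζ * (linModel f g f' (x k) (x k + d k) - linModel f g f' (x k) (x k))
  armijo : ∀ k, ArmijoAccepts f g f' θ (x k) (d k) (β ^ i k)
  armijo_min : ∀ k, ∀ j < i k, ¬ ArmijoAccepts f g f' θ (x k) (d k) (β ^ j)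
  step : ∀ k, x (k + 1) = x k + β ^ i k • d k

theorem IsIRPNSequence.mu_pos {θ ζ η c ρ β : ℝ} {x d : ℕ → V} {i : ℕ → ℕ} {μ : ℕ → ℝ}
    {H : ℕ → V →L[ℝ] V} (hI : IsIRPNSequence f g f' hess prox θ ζ η c ρ β x d i μ H) (hc : 0 < c)
    (k : ℕ) : 0 < μ k :=
  hI.mu_eq k ▸ mul_pos hc (Real.rpow_pos_of_pos (hI.residual_pos k) ρ)

variable [CompleteSpace V]

theorem HasGradientAt.hasDerivAt_comp_add_smul {G x w : V} {t : ℝ}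
    (h : HasGradientAt f G (x + t • w)) : HasDerivAt (fun s : ℝ ↦ f (x + s • w)) ⟪G, w⟫ t := by
  simpa using h.hasFDerivAt.hasDerivAt_comp_add_smul

theorem ConvexOn.add_inner_le_of_hasGradientAt (hf : ConvexOn ℝ univ f) {G x : V}
    (h : HasGradientAt f G x) (y : V) : f x + ⟪G, y - x⟫ ≤ f y := by
  have hd : HasDerivAt (fun t : ℝ ↦ t * (f y - f x) - f (x + t • (y - x)))
      (1 * (f y - f x) - ⟪G, y - x⟫) 0 :=
    ((hasDerivAt_id 0).mul_const _).sub (HasGradientAt.hasDerivAt_comp_add_smul (by simpa using h))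
  have := hd.nonneg_of_le_on_Ioc fun t ht ↦ by
    have := hf.apply_add_smul_le x (y - x) ht.1.le ht.2
    simp only [add_sub_cancel] at this
    simp only [zero_mul, zero_smul, add_zero]
    linarith
  linarith

theorem ConvexOn.inner_gradient_sub_nonneg (hf : ConvexOn ℝ univ f)
    (hgrad : ∀ x, HasGradientAt f (f' x) x) (x y : V) : 0 ≤ ⟪f' y - f' x, y - x⟫ := by
  have h₁ := hf.add_inner_le_of_hasGradientAt (hgrad x) y
  have h₂ := hf.add_inner_le_of_hasGradientAt (hgrad y) x
  rw [← neg_sub y x, inner_neg_right] at h₂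
  rw [inner_sub_left]
  linarith

theorem ConvexOn.inner_hessian_self_nonneg (hf : ConvexOn ℝ univ f)
    (hgrad : ∀ x, HasGradientAt f (f' x) x) (hhess : ∀ x, HasFDerivAt f' (hess x) x)
    (x u : V) : 0 ≤ ⟪hess x u, u⟫ := by
  have hd : HasDerivAt (fun t : ℝ ↦ ⟪u, f' (x + t • u)⟫) ⟪u, hess x u⟫ 0 :=
    (innerSL ℝ u).hasFDerivAt.comp_hasDerivAt 0
      (HasFDerivAt.hasDerivAt_comp_add_smul (by simpa using hhess x))
  rw [real_inner_comm]
  refine hd.nonneg_of_le_on_Ioc fun t ht ↦ ?_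
  have := hf.inner_gradient_sub_nonneg hgrad x (x + t • u)
  rw [add_sub_cancel_left, inner_smul_right, inner_sub_left] at this
  simp only [zero_smul, add_zero, ← real_inner_comm u]
  nlinarith [ht.1]

theorem le_add_inner_of_inner_gradient_sub_le (hgrad : ∀ x, HasGradientAt f (f' x) x)
    (x w : V) {a M : ℝ} (h : ∀ t ∈ Icc (0 : ℝ) 1, ⟪f' (x + t • w) - f' x, w⟫ - t * a ≤ M) :
    f (x + w) ≤ f x + ⟪f' x, w⟫ + a / 2 + M := by
  have hd (t : ℝ) : HasDerivAt (fun s ↦ f (x + s • w) - s * ⟪f' x, w⟫ - s ^ 2 / 2 * a)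
      (⟪f' (x + t • w) - f' x, w⟫ - t * a) t := by
    refine (((HasGradientAt.hasDerivAt_comp_add_smul (x := x) (w := w) (hgrad _)).fun_sub
      (hasDerivAt_mul_const ⟪f' x, w⟫)).fun_sub
      (((hasDerivAt_pow 2 t).div_const 2).mul_const a)).congr_deriv ?_
    rw [inner_sub_left]; ring
  have := (convex_Icc (0 : ℝ) 1).image_sub_le_mul_sub_of_deriv_le
    (fun t _ ↦ (hd t).continuousAt.continuousWithinAt)
    (fun t _ ↦ (hd t).differentiableAt.differentiableWithinAt)
    (fun t ht ↦ (hd t).deriv ▸ h t (interior_subset ht)) 0 (by simp) 1 (by simp) zero_le_one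
  simp only [one_smul, zero_smul, add_zero] at this
  linarith

theorem le_add_inner_add_sq_of_lipschitz (hgrad : ∀ x, HasGradientAt f (f' x) x) {L : ℝ}
    (hL : 0 ≤ L) (hlip : ∀ y z, ‖f' y - f' z‖ ≤ L * ‖y - z‖) (x w : V) :
    f (x + w) ≤ f x + ⟪f' x, w⟫ + L * ‖w‖ ^ 2 := by
  have := le_add_inner_of_inner_gradient_sub_le hgrad x w (a := 0) fun t ht ↦
    calc ⟪f' (x + t • w) - f' x, w⟫ - t * 0 ≤ ‖f' (x + t • w) - f' x‖ * ‖w‖ := by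
          simpa using real_inner_le_norm _ _
      _ ≤ L * ‖(x + t • w) - x‖ * ‖w‖ := by gcongr; exact hlip _ x
      _ ≤ L * ‖w‖ * ‖w‖ := by
          rw [add_sub_cancel_left, norm_smul, Real.norm_of_nonneg ht.1]
          gcongr
          exact mul_le_of_le_one_left (norm_nonneg w) ht.2
      _ = L * ‖w‖ ^ 2 := by ring
  linarith

theorem le_add_inner_add_hessian_add_cube (hgrad : ∀ x, HasGradientAt f (f' x) x)
    (hhess : ∀ x, HasFDerivAt f' (hess x) x) {L : ℝ} (hL : 0 ≤ L)
    (hlip : ∀ y z, ‖hess y - hess z‖ ≤ L * ‖y - z‖) (x w : V) :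
    f (x + w) ≤ f x + ⟪f' x, w⟫ + ⟪hess x w, w⟫ / 2 + L * ‖w‖ ^ 3 :=
  le_add_inner_of_inner_gradient_sub_le hgrad x w fun t ht ↦
    calc ⟪f' (x + t • w) - f' x, w⟫ - t * ⟪hess x w, w⟫
        = ⟪f' (x + t • w) - f' x - hess x ((x + t • w) - x), w⟫ := by
          simp [inner_sub_left, inner_smul_left]
      _ ≤ L * ‖(x + t • w) - x‖ ^ 2 * ‖w‖ :=
          (real_inner_le_norm _ _).trans (by
            gcongr; exact norm_gradient_sub_sub_hessian_le hhess hL hlip x _)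
      _ ≤ L * ‖w‖ ^ 2 * ‖w‖ := by
          rw [add_sub_cancel_left, norm_smul, Real.norm_of_nonneg ht.1]
          have := mul_le_of_le_one_left (norm_nonneg w) ht.2
          have := mul_nonneg ht.1 (norm_nonneg w)
          gcongr
      _ = L * ‖w‖ ^ 3 := by ring

theorem IsMinOn.sub_le_inner_gradient (hgrad : ∀ x, HasGradientAt f (f' x) x)
    (hg : ConvexOn ℝ univ g) {xb : V} (hxb : IsMinOn (f + g) univ xb) (u : V) :
    g xb - g u ≤ ⟪f' xb, u - xb⟫ := by
  have hd : HasDerivAt (fun t : ℝ ↦ f (xb + t • (u - xb)) + t * (g u - g xb))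
      (⟪f' xb, u - xb⟫ + 1 * (g u - g xb)) 0 :=
    (HasGradientAt.hasDerivAt_comp_add_smul (by simpa using hgrad xb)).fun_add
      ((hasDerivAt_id 0).mul_const _)
  have := hd.nonneg_of_le_on_Ioc fun t ht ↦ by
    have hmin : f xb + g xb ≤ f (xb + t • (u - xb)) + g (xb + t • (u - xb)) := hxb (mem_univ _)
    have hconv := hg.apply_add_smul_le xb (u - xb) ht.1.le ht.2
    rw [add_sub_cancel] at hconv
    simp only [zero_smul, add_zero, zero_mul]
    linarith
  linarith

theorem IsProximalMap.inner_add_gradient_nonneg (hprox : IsProximalMap g prox)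
    (hg : ConvexOn ℝ univ g) (hgrad : ∀ x, HasGradientAt f (f' x) x) {xb : V}
    (hxb : IsMinOn (f + g) univ xb) (v : V) : 0 ≤ ⟪v - prox v + f' xb, prox v - xb⟫ := by
  have h₁ := hprox.inner_sub_le hg v xb
  have h₂ := hxb.sub_le_inner_gradient hgrad hg (prox v)
  rw [← neg_sub (prox v) xb, inner_neg_right] at h₁
  rw [inner_add_left]
  linarith

theorem IsProximalMap.mul_norm_prox_sub_le (hprox : IsProximalMap g prox)
    (hg : ConvexOn ℝ univ g) (hgrad : ∀ x, HasGradientAt f (f' x) x)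
    (hhess : ∀ x, HasFDerivAt f' (hess x) x) {L : ℝ} (hL : 0 ≤ L)
    (hlip : ∀ y z, ‖hess y - hess z‖ ≤ L * ‖y - z‖) {xb : V} (hxb : IsMinOn (f + g) univ xb)
    {x : V} (hpsd : ∀ u, 0 ≤ ⟪hess x u, u⟫) {μ : ℝ} (hμ : 0 ≤ μ) (H : V →L[ℝ] V)
    (hH : H = hess x + μ • ContinuousLinearMap.id ℝ V) (y : V) :
    μ * ‖prox (y - f' x - H (y - x)) - xb‖
      ≤ (1 + ‖H‖) * ‖y - prox (y - f' x - H (y - x))‖ + μ * ‖x - xb‖ + L * ‖x - xb‖ ^ 2 := by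
  set p := prox (y - f' x - H (y - x))
  set e := f' x - f' xb - hess x (x - xb)
  have he : ‖e‖ ≤ L * ‖x - xb‖ ^ 2 := by
    have := norm_gradient_sub_sub_hessian_le hhess hL hlip x xb
    rwa [← norm_neg, norm_sub_rev xb x, show -(f' xb - f' x - hess x (xb - x)) = e by
      simp only [e, ← neg_sub x xb, map_neg]; abel] at this
  have hcoercive : μ * ‖p - xb‖ ^ 2 ≤ ⟪H (p - xb), p - xb⟫ := by
    have := hpsd (p - xb)
    simp only [hH, add_apply, smul_apply,
      ContinuousLinearMap.id_apply, inner_add_left, real_inner_smul_left,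
      real_inner_self_eq_norm_sq]
    linarith
  have hsplit : y - f' x - H (y - x) - p + f' xb
      = (y - p) - H (y - p) + μ • (x - xb) - e - H (p - xb) := by
    have : y - x = (y - p) + (p - xb) - (x - xb) := by abel
    rw [this, map_sub, map_add]
    simp only [e, hH, add_apply, smul_apply,
      ContinuousLinearMap.id_apply]
    abel
  have hmono := hprox.inner_add_gradient_nonneg hg hgrad hxb (y - f' x - H (y - x))
  rw [hsplit, inner_sub_left] at hmono
  have hbound : ⟪(y - p) - H (y - p) + μ • (x - xb) - e, p - xb⟫
      ≤ ((1 + ‖H‖) * ‖y - p‖ + μ * ‖x - xb‖ + L * ‖x - xb‖ ^ 2) * ‖p - xb‖ := by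
    refine (real_inner_le_norm _ _).trans (mul_le_mul_of_nonneg_right ?_ (norm_nonneg _))
    refine (norm_sub_le _ _).trans (add_le_add ((norm_add_le _ _).trans
      (add_le_add ((norm_sub_le _ _).trans ?_) ?_)) he)
    · linarith [H.le_opNorm (y - p)]
    · rw [norm_smul, Real.norm_of_nonneg hμ]
  rcases (norm_nonneg (p - xb)).eq_or_lt with h0 | hpos
  · rw [← h0, mul_zero]
    have := norm_nonneg H
    positivity
  · refine le_of_mul_le_mul_right ?_ hpos
    nlinarith

theorem IsProximalMap.mul_norm_sub_le_rpow (hprox : IsProximalMap g prox)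
    (hg : ConvexOn ℝ univ g) (hgrad : ∀ x, HasGradientAt f (f' x) x)
    (hhess : ∀ x, HasFDerivAt f' (hess x) x) {L₁ L₂ : ℝ} (hL₂ : 0 ≤ L₂)
    (hlip : ∀ y z, ‖hess y - hess z‖ ≤ L₂ * ‖y - z‖) {xb : V} (hxb : IsMinOn (f + g) univ xb)
    {x : V} (hpsd : ∀ u, 0 ≤ ⟪hess x u, u⟫) (hhessx : ‖hess x‖ ≤ L₁) {c ρ r η κ μ : ℝ}
    (hc : 0 ≤ c) (hρ₀ : 0 ≤ ρ) (hρ₁ : ρ ≤ 1) (hr : 0 < r) (hr₁ : r ≤ 1) (hμ : μ = c * r ^ ρ)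
    (H : V →L[ℝ] V) (hH : H = hess x + μ • ContinuousLinearMap.id ℝ V) (y : V)
    (hy : ‖y - prox (y - f' x - H (y - x))‖ ≤ η * r ^ (1 + ρ)) (hxxb : ‖x - xb‖ ≤ κ * r) :
    μ * ‖y - x‖ ≤ ((1 + L₁ + 2 * c) * η + 2 * c * κ + L₂ * κ ^ 2) * r ^ (1 + ρ) := by
  set p := prox (y - f' x - H (y - x))
  have hrρ : r ^ ρ ≤ 1 := Real.rpow_le_one hr.le hr₁ hρ₀
  have hμ₀ : 0 ≤ μ := hμ ▸ mul_nonneg hc (Real.rpow_nonneg hr.le ρ)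
  have hμc : μ ≤ c := hμ ▸ mul_le_of_le_one_right hc hrρ
  have hHn : 1 + ‖H‖ + μ ≤ 1 + L₁ + 2 * c := by
    have := hH ▸ norm_add_smul_id_le (hess x) hμ₀
    linarith
  have hr₂ : r ^ 2 ≤ r ^ (1 + ρ) := by
    rw [← Real.rpow_natCast]
    exact Real.rpow_le_rpow_of_exponent_ge hr hr₁ (by push_cast; linarith)
  have hr₃ : r ^ (1 + ρ) = r * r ^ ρ := by rw [Real.rpow_add hr, Real.rpow_one]
  have hloc := hprox.mul_norm_prox_sub_le hg hgrad hhess hL₂ hlip hxb hpsd hμ₀ H hH y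
  have htri : ‖y - x‖ ≤ ‖y - p‖ + ‖p - xb‖ + ‖x - xb‖ := by
    calc ‖y - x‖ = ‖(y - p) + (p - xb) - (x - xb)‖ := by congr 1; abel
      _ ≤ _ := (norm_sub_le _ _).trans (by gcongr; exact norm_add_le _ _)
  have hδ₂ : ‖x - xb‖ ^ 2 ≤ κ ^ 2 * r ^ 2 := by
    rw [← mul_pow]; exact pow_le_pow_left₀ (norm_nonneg _) hxxb 2
  have h₁ : (1 + ‖H‖ + μ) * ‖y - p‖ ≤ (1 + L₁ + 2 * c) * (η * r ^ (1 + ρ)) :=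
    mul_le_mul hHn hy (norm_nonneg _) (by linarith [(norm_nonneg _).trans hhessx])
  have h₂ : μ * ‖x - xb‖ ≤ c * κ * r ^ (1 + ρ) := by
    rw [hr₃, hμ]
    calc c * r ^ ρ * ‖x - xb‖ ≤ c * r ^ ρ * (κ * r) := by gcongr
      _ = _ := by ring
  have h₃ : L₂ * ‖x - xb‖ ^ 2 ≤ L₂ * κ ^ 2 * r ^ (1 + ρ) := by
    rw [mul_assoc]; gcongr; exact hδ₂.trans (by gcongr)
  nlinarith [mul_le_mul_of_nonneg_left htri hμ₀]

theorem armijo_of_mul_le (hgrad : ∀ x, HasGradientAt f (f' x) x) {L : ℝ} (hL : 0 ≤ L)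
    (hlip : ∀ y z, ‖f' y - f' z‖ ≤ L * ‖y - z‖) (hg : ConvexOn ℝ univ g) {x d : V}
    {μ ζ θ : ℝ} (hθ : θ ≤ 1)
    (hζ : ζ < 1)
    (hdec : μ * ‖d‖ ^ 2 ≤ 2 * (1 - ζ) * (linModel f g f' x x - linModel f g f' x (x + d)))
    {t : ℝ} (ht₀ : 0 ≤ t) (ht₁ : t ≤ 1) (ht : t * (2 * (1 - ζ) * L) ≤ (1 - θ) * μ) :
    ArmijoAccepts f g f' θ x d t := by
  have hdesc := le_add_inner_add_sq_of_lipschitz hgrad hL hlip x (t • d)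
  have hseg := linModel_add_smul_le (f := f) (f' := f') hg x d ht₀ ht₁
  have hquad : L * ‖t • d‖ ^ 2
      ≤ (1 - θ) * (t * (linModel f g f' x x - linModel f g f' x (x + d))) := by
    rw [norm_smul, Real.norm_of_nonneg ht₀]
    have h1 := mul_le_mul_of_nonneg_left ht (mul_nonneg ht₀ (sq_nonneg ‖d‖))
    have h2 := mul_le_mul_of_nonneg_left hdec (mul_nonneg (sub_nonneg.2 hθ) ht₀)
    refine le_of_mul_le_mul_left ?_ (by linarith : 0 < 2 * (1 - ζ))
    nlinarith
  simp only [ArmijoAccepts, linModel_self, linModel_add, Pi.add_apply] at hseg hquad ⊢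
  nlinarith

theorem armijo_one_of_two_mul_norm_le (hgrad : ∀ x, HasGradientAt f (f' x) x)
    (hhess : ∀ x, HasFDerivAt f' (hess x) x) {L : ℝ} (hL : 0 ≤ L)
    (hlip : ∀ y z, ‖hess y - hess z‖ ≤ L * ‖y - z‖) {x d : V} {μ ζ θ : ℝ}
    {H : V →L[ℝ] V} (hH : H = hess x + μ • ContinuousLinearMap.id ℝ V)
    (hq : quadModel f g f' H x (x + d) - quadModel f g f' H x x
      ≤ ζ * (linModel f g f' x (x + d) - linModel f g f' x x))
    (hθζ : θ ≤ ζ) (hdec : 0 ≤ linModel f g f' x x - linModel f g f' x (x + d))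
    (hd : 2 * L * ‖d‖ ≤ μ) : ArmijoAccepts f g f' θ x d 1 := by
  have htaylor := le_add_inner_add_hessian_add_cube hgrad hhess hL hlip x d
  have hcube : L * ‖d‖ ^ 3 ≤ μ * ‖d‖ ^ 2 / 2 := by
    have := mul_le_mul_of_nonneg_right hd (sq_nonneg ‖d‖)
    nlinarith
  rw [hH, quadModel_add_sub_quadModel] at hq
  have := mul_le_mul_of_nonneg_right hθζ hdec
  simp only [ArmijoAccepts, one_smul, linModel_self, linModel_add, Pi.add_apply] at hq this ⊢
  nlinarith

theorem pow_eq_one_or_mul_lt_pow_of_not_armijo (hgrad : ∀ x, HasGradientAt f (f' x) x) {L : ℝ}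
    (hL : 0 < L) (hlip : ∀ y z, ‖f' y - f' z‖ ≤ L * ‖y - z‖) (hg : ConvexOn ℝ univ g)
    {x d : V} {μ ζ θ β : ℝ} (hθ : θ < 1) (hζ : ζ < 1)
    (hdec : μ * ‖d‖ ^ 2 ≤ 2 * (1 - ζ) * (linModel f g f' x x - linModel f g f' x (x + d)))
    (hβ₀ : 0 < β) (hβ₁ : β ≤ 1) {i : ℕ}
    (hi : ∀ j < i, ¬ ArmijoAccepts f g f' θ x d (β ^ j)) :
    β ^ i = 1 ∨ β * (1 - θ) / (2 * (1 - ζ) * L) * μ < β ^ i := by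
  have hpos : 0 < 2 * (1 - ζ) * L := mul_pos (by linarith) hL
  refine (pow_eq_one_or_mul_lt_pow hβ₀ hβ₁ (τ := (1 - θ) * μ / (2 * (1 - ζ) * L))
    (fun t ht htτ ↦ armijo_of_mul_le hgrad hL.le hlip hg hθ.le hζ hdec ht.1.le ht.2
      ((le_div_iff₀ hpos).1 htτ)) hi).imp_right fun h ↦ lt_of_eq_of_lt (by ring) h

theorem IsProximalMap.armijo_one_of_isMinOn (hprox : IsProximalMap g prox)
    (hg : ConvexOn ℝ univ g) (hgrad : ∀ x, HasGradientAt f (f' x) x)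
    (hhess : ∀ x, HasFDerivAt f' (hess x) x) {L₁ L₂ : ℝ} (hL₂ : 0 ≤ L₂)
    (hlip : ∀ y z, ‖hess y - hess z‖ ≤ L₂ * ‖y - z‖) {xb : V} (hxb : IsMinOn (f + g) univ xb)
    {x d : V} (hpsd : ∀ u, 0 ≤ ⟪hess x u, u⟫) (hhessx : ‖hess x‖ ≤ L₁)
    {c ρ r η κ μ ζ θ : ℝ} (hc : 0 < c) (hρ₀ : 0 ≤ ρ) (hρ₁ : ρ ≤ 1) (hr : 0 < r) (hr₁ : r ≤ 1)
    (hμ : μ = c * r ^ ρ) {H : V →L[ℝ] V} (hH : H = hess x + μ • ContinuousLinearMap.id ℝ V)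
    (hy : ‖x + d - prox (x + d - f' x - H (x + d - x))‖ ≤ η * r ^ (1 + ρ))
    (hxxb : ‖x - xb‖ ≤ κ * r)
    (hq : quadModel f g f' H x (x + d) - quadModel f g f' H x x
      ≤ ζ * (linModel f g f' x (x + d) - linModel f g f' x x))
    (hθζ : θ ≤ ζ) (hζ : ζ < 1)
    (hsmall : 2 * L₂ * ((1 + L₁ + 2 * c) * η + 2 * c * κ + L₂ * κ ^ 2) * r ^ (1 - ρ) ≤ c ^ 2) :
    ArmijoAccepts f g f' θ x d 1 := by
  have hμ₀ : 0 ≤ μ := hμ ▸ by positivity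
  have hdec := mul_norm_sq_le_of_quadModel_sub_le hH (hpsd d) hq
  have hD := nonneg_of_mul_nonneg_right ((mul_nonneg hμ₀ (sq_nonneg _)).trans hdec)
    (by linarith)
  have hbound := hprox.mul_norm_sub_le_rpow hg hgrad hhess hL₂ hlip hxb hpsd hhessx hc.le hρ₀
    hρ₁ hr hr₁ hμ H hH (x + d) hy hxxb
  rw [add_sub_cancel_left] at hbound
  exact armijo_one_of_two_mul_norm_le hgrad hhess hL₂ hlip hH hq hθζ hD
    (two_mul_le_of_mul_le_rpow hr hc hL₂ hμ hbound hsmall)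
namespace IsIRPNSequence

variable {θ ζ η c ρ β : ℝ} {x d : ℕ → V} {i : ℕ → ℕ} {μ : ℕ → ℝ} {H : ℕ → V →L[ℝ] V}

theorem mul_norm_sq_le (hI : IsIRPNSequence f g f' hess prox θ ζ η c ρ β x d i μ H)
    (hf : ConvexOn ℝ univ f) (hgrad : ∀ x, HasGradientAt f (f' x) x)
    (hhess : ∀ x, HasFDerivAt f' (hess x) x) (k : ℕ) :
    μ k * ‖d k‖ ^ 2
      ≤ 2 * (1 - ζ) * (linModel f g f' (x k) (x k) - linModel f g f' (x k) (x k + d k)) :=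
  mul_norm_sq_le_of_quadModel_sub_le (hI.H_eq k) (hf.inner_hessian_self_nonneg hgrad hhess _ _)
    (hI.inexact_model k)

theorem pow_mul_mul_norm_sq_le (hI : IsIRPNSequence f g f' hess prox θ ζ η c ρ β x d i μ H)
    (hf : ConvexOn ℝ univ f) (hgrad : ∀ x, HasGradientAt f (f' x) x)
    (hhess : ∀ x, HasFDerivAt f' (hess x) x) (hg : ConvexOn ℝ univ g) (hθ : 0 < θ)
    (hζ : ζ ≤ 1) (hβ₀ : 0 ≤ β) (hβ₁ : β ≤ 1) (k : ℕ) :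
    β ^ i k * (μ k * ‖d k‖ ^ 2) ≤ 2 * (1 - ζ) / θ * ((f + g) (x k) - (f + g) (x (k + 1))) :=
  hI.step k ▸ mul_mul_norm_sq_le_of_armijo hg hθ hζ (hI.mul_norm_sq_le hf hgrad hhess k)
    (pow_nonneg hβ₀ _) (pow_le_one₀ hβ₀ hβ₁) (hI.armijo k)

theorem antitone (hI : IsIRPNSequence f g f' hess prox θ ζ η c ρ β x d i μ H)
    (hf : ConvexOn ℝ univ f) (hgrad : ∀ x, HasGradientAt f (f' x) x)
    (hhess : ∀ x, HasFDerivAt f' (hess x) x) (hg : ConvexOn ℝ univ g) (hc : 0 < c)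
    (hθ : 0 < θ) (hζ : ζ < 1) (hβ₀ : 0 < β) (hβ₁ : β ≤ 1) :
    Antitone fun k ↦ (f + g) (x k) := antitone_nat_of_succ_le fun k ↦ by
  have := (mul_nonneg (pow_nonneg hβ₀.le _) (mul_nonneg (hI.mu_pos hc k).le (sq_nonneg _))).trans
    (hI.pow_mul_mul_norm_sq_le hf hgrad hhess hg hθ hζ.le hβ₀.le hβ₁ k)
  have hζ' : 0 < 1 - ζ := sub_pos.2 hζ
  linarith [nonneg_of_mul_nonneg_right this (by positivity)]

theorem tendsto_residual_zero (hI : IsIRPNSequence f g f' hess prox θ ζ η c ρ β x d i μ H)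
    (hf : ConvexOn ℝ univ f) (hgrad : ∀ x, HasGradientAt f (f' x) x)
    (hhess : ∀ x, HasFDerivAt f' (hess x) x) {L : ℝ} (hL : 0 < L)
    (hlip : ∀ y z, ‖f' y - f' z‖ ≤ L * ‖y - z‖) (hg : ConvexOn ℝ univ g)
    (hprox : IsProximalMap g prox) (hθ₀ : 0 < θ) (hθ₁ : θ < 1) (hζ : ζ < 1) (hη₀ : 0 ≤ η)
    (hη₁ : η < 1) (hc : 0 < c) (hρ₀ : 0 ≤ ρ) (hρ₂ : ρ ≤ 2) (hβ₀ : 0 < β) (hβ₁ : β ≤ 1) {m : ℝ}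
    (hm : ∀ k, m ≤ (f + g) (x k)) :
    Tendsto (fun k ↦ proxResidual f' prox (x k)) atTop (𝓝 0) := by
  have hθ' : 0 < 1 - θ := sub_pos.2 hθ₁
  have hζ' : 0 < 1 - ζ := sub_pos.2 hζ
  have hdec := hI.mul_norm_sq_le hf hgrad hhess
  refine tendsto_zero_of_tendsto_mul_mul_sq (A := 2 + L) (s := fun k ↦ ‖d k‖) (by linarith) hc
    (by positivity) hη₁ hρ₀ hρ₂ hI.residual_pos hI.mu_eq (fun k ↦ norm_nonneg _)
    (fun k ↦ pow_eq_one_or_mul_lt_pow_of_not_armijo hgrad hL hlip hg hθ₁ hζ (hdec k) hβ₀ hβ₁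
      (hI.armijo_min k)) (fun k ↦ ?_)
    (tendsto_zero_of_le_mul_sub_succ (fun k ↦ by have := hI.mu_pos hc k; positivity)
      (by positivity) (hI.pow_mul_mul_norm_sq_le hf hgrad hhess hg hθ₀ hζ.le hβ₀.le hβ₁) hm)
  have hH : ‖H k‖ ≤ L + μ k := hI.H_eq k ▸ (norm_add_smul_id_le _ (hI.mu_pos hc k).le).trans
    (by gcongr; exact (hhess _).le_of_lip' hL.le (.of_forall fun z ↦ hlip z _))
  have := hprox.one_sub_mul_norm_le hg hH
    ((hI.inexact_residual k).trans (mul_le_mul_of_nonneg_left (min_le_left _ _) hη₀))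
  rwa [add_sub_cancel_left, ← add_assoc] at this

theorem eventually_pow_eq_one (hI : IsIRPNSequence f g f' hess prox θ ζ η c ρ β x d i μ H)
    (hf : ConvexOn ℝ univ f) (hgrad : ∀ x, HasGradientAt f (f' x) x)
    (hhess : ∀ x, HasFDerivAt f' (hess x) x) {L₁ L₂ : ℝ} (hL₁ : 0 < L₁)
    (hlip : ∀ y z, ‖f' y - f' z‖ ≤ L₁ * ‖y - z‖) (hL₂ : 0 ≤ L₂)
    (hlip₂ : ∀ y z, ‖hess y - hess z‖ ≤ L₂ * ‖y - z‖) (hg : ConvexOn ℝ univ g)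
    (hprox : IsProximalMap g prox) (hθ₀ : 0 < θ) (hθζ : θ ≤ ζ) (hζ : ζ < 1) (hη₀ : 0 ≤ η)
    (hη₁ : η < 1) (hc : 0 < c) (hρ₀ : 0 ≤ ρ) (hρ₁ : ρ < 1) (hβ₀ : 0 < β) (hβ₁ : β ≤ 1)
    {X : Set V} (hX : ∀ y ∈ X, IsMinOn (f + g) univ y) (hXne : X.Nonempty) {κ ε : ℝ}
    (hκ : 0 < κ) (hε : 0 < ε)
    (hEB : ∀ y, (f + g) y ≤ (f + g) (x 0) → proxResidual f' prox y ≤ ε →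
      Metric.infDist y X ≤ κ * proxResidual f' prox y) :
    ∀ᶠ k in atTop, β ^ i k = 1 := by
  obtain ⟨xs, hxs⟩ := hXne
  have hr0 := hI.tendsto_residual_zero hf hgrad hhess hL₁ hlip hg hprox hθ₀ (by linarith) hζ hη₀
    hη₁ hc hρ₀ (by linarith) hβ₀ hβ₁ fun k ↦ hX xs hxs (mem_univ (x k))
  set C := (1 + L₁ + 2 * c) * η + 2 * c * (2 * κ) + L₂ * (2 * κ) ^ 2
  have hsmall :
      Tendsto (fun k ↦ 2 * L₂ * C * proxResidual f' prox (x k) ^ (1 - ρ)) atTop (𝓝 0) := by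
    simpa [Real.zero_rpow (sub_ne_zero.2 hρ₁.ne')] using
      (hr0.rpow_const (.inr (sub_nonneg.2 hρ₁.le))).const_mul (2 * L₂ * C)
  filter_upwards [hr0.eventually (ge_mem_nhds (lt_min hε one_pos)),
    hsmall.eventually (ge_mem_nhds (pow_pos hc 2))] with k hrk hsmallk
  -- `X` need not be closed, so instead of a nearest point take one within `2κ r(x^k)`.
  obtain ⟨xb, hxb, hdist⟩ := (Metric.infDist_lt_iff ⟨xs, hxs⟩).1
    ((hEB _ (hI.antitone hf hgrad hhess hg hc hθ₀ hζ hβ₀ hβ₁ (Nat.zero_le k))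
      (hrk.trans (min_le_left _ _))).trans_lt
      (by nlinarith [hI.residual_pos k] :
        κ * proxResidual f' prox (x k) < 2 * κ * proxResidual f' prox (x k)))
  have hunit := hprox.armijo_one_of_isMinOn hg hgrad hhess hL₂ hlip₂ (hX xb hxb)
    (hf.inner_hessian_self_nonneg hgrad hhess (x k))
    ((hhess _).le_of_lip' hL₁.le (.of_forall fun z ↦ hlip z _)) hc hρ₀ hρ₁.le
    (hI.residual_pos k) (hrk.trans (min_le_right _ _)) (hI.mu_eq k) (hI.H_eq k)
    ((hI.inexact_residual k).trans (mul_le_mul_of_nonneg_left (min_le_right _ _) hη₀))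
    (by rw [← dist_eq_norm]; exact hdist.le) (hI.inexact_model k) hθζ hζ hsmallk
  have hi : i k = 0 := Nat.eq_zero_of_not_pos fun hpos ↦
    hI.armijo_min k 0 hpos (by rwa [pow_zero])
  rw [hi, pow_zero]

end IsIRPNSequence

theorem stmt12_general {n : ℕ} (f g : E n → ℝ) (f' : E n → E n)
    (hess : E n → E n →L[ℝ] E n) (prox : E n → E n)
    (hfconv : ConvexOn ℝ Set.univ f)
    (hgrad : ∀ x, HasGradientAt f (f' x) x)
    (hhess : ∀ x, HasFDerivAt f' (hess x) x)
    (hgconv : ConvexOn ℝ Set.univ g)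
    (hprox : ∀ v u, (1/2) * ‖prox v - v‖ ^ 2 + g (prox v) ≤ (1/2) * ‖u - v‖ ^ 2 + g u)
    (F : E n → ℝ) (hF : ∀ y, F y = f y + g y)
    (X : Set (E n)) (hX : X = {y | ∀ z, F y ≤ F z}) (hXne : X.Nonempty)
    (r : E n → ℝ) (hr : ∀ y, r y = ‖y - prox (y - f' y)‖)
    (L₁ : ℝ) (hL₁ : 0 < L₁) (hlip : ∀ y z, ‖f' y - f' z‖ ≤ L₁ * ‖y - z‖)
    -- IRPN parameters
    (θ ζ η c ρ β : ℝ)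
    (hθ : θ ∈ Set.Ioo (0:ℝ) (1/2)) (hζ : ζ ∈ Set.Ioo θ (1/2))
    (hη : η ∈ Set.Ioo (0:ℝ) 1) (hc : 0 < c) (hρ : ρ ∈ Set.Icc (0:ℝ) 1)
    (hβ : β ∈ Set.Ioo (0:ℝ) 1)
    -- IRPN iterates and auxiliary data
    (x xh : ℕ → E n) (μ : ℕ → ℝ) (H : ℕ → E n →L[ℝ] E n)
    (ℓ q : ℕ → E n → ℝ) (rk : ℕ → E n → ℝ)
    (d : ℕ → E n) (i : ℕ → ℕ) (α : ℕ → ℝ)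
    (hrpos : ∀ k, 0 < r (x k))
    (hμ : ∀ k, μ k = c * r (x k) ^ ρ)
    (hH : ∀ k, H k = hess (x k) + μ k • ContinuousLinearMap.id ℝ (E n))
    (hℓ : ∀ k y, ℓ k y = f (x k) + ⟪f' (x k), y - x k⟫ + g y)
    (hq : ∀ k y, q k y = ℓ k y + (1/2) * ⟪H k (y - x k), y - x k⟫)
    (hrk : ∀ k y, rk k y = ‖y - prox (y - f' (x k) - H k (y - x k))‖)
    (hinex1 : ∀ k, rk k (xh k) ≤ η * min (r (x k)) (r (x k) ^ (1 + ρ)))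
    (hinex2 : ∀ k, q k (xh k) - q k (x k) ≤ ζ * (ℓ k (xh k) - ℓ k (x k)))
    (hd : ∀ k, d k = xh k - x k)
    (hdesc : ∀ k, F (x k) - F (x k + β ^ i k • d k) ≥
      θ * (ℓ k (x k) - ℓ k (x k + β ^ i k • d k)))
    (hmin : ∀ k j, j < i k → ¬ (F (x k) - F (x k + β ^ j • d k) ≥
      θ * (ℓ k (x k) - ℓ k (x k + β ^ j • d k))))
    (hα : ∀ k, α k = β ^ i k)
    (hstep : ∀ k, x (k + 1) = x k + α k • d k)
    -- Lipschitz Hessian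
    (L₂ : ℝ) (hL₂ : 0 < L₂) (hlip2 : ∀ y z, ‖hess y - hess z‖ ≤ L₂ * ‖y - z‖)
    -- Luo-Tseng error bound
    (κ ε : ℝ) (hκ : 0 < κ) (hε : 0 < ε)
    (hEB : ∀ y : E n, F y ≤ F (x 0) → r y ≤ ε → Metric.infDist y X ≤ κ * r y)
    (hρlt : ρ < 1) :
    ∃ k₀ : ℕ, ∀ k, k₀ ≤ k → α k = 1 := by
  obtain ⟨hθ₀, -⟩ := hθ
  obtain ⟨hθζ, hζ₁⟩ := hζ
  obtain ⟨hη₀, hη₁⟩ := hη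
  obtain ⟨hρ₀, -⟩ := hρ
  obtain ⟨hβ₀, hβ₁⟩ := hβ
  obtain rfl : F = f + g := funext hF
  obtain rfl : r = proxResidual f' prox := funext hr
  obtain rfl : α = fun k ↦ β ^ i k := funext hα
  obtain rfl : xh = fun k ↦ x k + d k := funext fun k ↦ by rw [hd]; abel
  obtain rfl : ℓ = fun k ↦ linModel f g f' (x k) := funext fun k ↦ funext (hℓ k)
  obtain rfl : q = fun k ↦ quadModel f g f' (H k) (x k) := funext fun k ↦ funext (hq k)
  obtain rfl : rk = fun k y ↦ ‖y - prox (y - f' (x k) - H k (y - x k))‖ :=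
    funext fun k ↦ funext (hrk k)
  have hI : IsIRPNSequence f g f' hess prox θ ζ η c ρ β x d i μ H :=
    ⟨hrpos, hμ, hH, hinex1, hinex2, hdesc, hmin, hstep⟩
  exact eventually_atTop.1 <| hI.eventually_pow_eq_one hfconv hgrad hhess hL₁ hlip hL₂.le hlip2
    hgconv hprox hθ₀ hθζ.le (by linarith) hη₀.le hη₁ hc hρ₀ hρlt hβ₀ hβ₁.le
    (fun y hy z _ ↦ (hX ▸ hy) z) hXne hκ hε hEB

/-- Under the L₁-Lipschitz gradient, L₂-Lipschitz Hessian, Luo–Tseng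
error bound, and IRPN iteration hypotheses, if `ρ ∈ [0,1)` then the step size
eventually equals 1: there is `k₀ ≥ 0` with `α_k = 1` for all `k ≥ k₀`. -/
theorem stmt12 {n : ℕ} (f g : E n → ℝ) (f' : E n → E n)
    (hess : E n → E n →L[ℝ] E n) (prox : E n → E n)
    (hfconv : ConvexOn ℝ Set.univ f) (hfC2 : ContDiff ℝ 2 f)
    (hgrad : ∀ x, HasGradientAt f (f' x) x)
    (hhess : ∀ x, HasFDerivAt f' (hess x) x)
    (hsa : ∀ x u w, ⟪hess x u, w⟫ = ⟪u, hess x w⟫)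
    (hgconv : ConvexOn ℝ Set.univ g) (hgcont : Continuous g)
    (hprox : ∀ v u, (1/2) * ‖prox v - v‖ ^ 2 + g (prox v) ≤ (1/2) * ‖u - v‖ ^ 2 + g u)
    (F : E n → ℝ) (hF : ∀ y, F y = f y + g y)
    (X : Set (E n)) (hX : X = {y | ∀ z, F y ≤ F z}) (hXne : X.Nonempty)
    (r : E n → ℝ) (hr : ∀ y, r y = ‖y - prox (y - f' y)‖)
    (L₁ : ℝ) (hL₁ : 0 < L₁) (hlip : ∀ y z, ‖f' y - f' z‖ ≤ L₁ * ‖y - z‖)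
    -- IRPN parameters
    (θ ζ η c ρ β : ℝ)
    (hθ : θ ∈ Set.Ioo (0:ℝ) (1/2)) (hζ : ζ ∈ Set.Ioo θ (1/2))
    (hη : η ∈ Set.Ioo (0:ℝ) 1) (hc : 0 < c) (hρ : ρ ∈ Set.Icc (0:ℝ) 1)
    (hβ : β ∈ Set.Ioo (0:ℝ) 1)
    -- IRPN iterates and auxiliary data
    (x xh : ℕ → E n) (μ : ℕ → ℝ) (H : ℕ → E n →L[ℝ] E n)
    (ℓ q : ℕ → E n → ℝ) (rk : ℕ → E n → ℝ)
    (d : ℕ → E n) (i : ℕ → ℕ) (α : ℕ → ℝ)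
    (hrpos : ∀ k, 0 < r (x k))
    (hμ : ∀ k, μ k = c * r (x k) ^ ρ)
    (hH : ∀ k, H k = hess (x k) + μ k • ContinuousLinearMap.id ℝ (E n))
    (hℓ : ∀ k y, ℓ k y = f (x k) + ⟪f' (x k), y - x k⟫ + g y)
    (hq : ∀ k y, q k y = ℓ k y + (1/2) * ⟪H k (y - x k), y - x k⟫)
    (hrk : ∀ k y, rk k y = ‖y - prox (y - f' (x k) - H k (y - x k))‖)
    (hinex1 : ∀ k, rk k (xh k) ≤ η * min (r (x k)) (r (x k) ^ (1 + ρ)))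
    (hinex2 : ∀ k, q k (xh k) - q k (x k) ≤ ζ * (ℓ k (xh k) - ℓ k (x k)))
    (hd : ∀ k, d k = xh k - x k)
    (hdesc : ∀ k, F (x k) - F (x k + β ^ i k • d k) ≥
      θ * (ℓ k (x k) - ℓ k (x k + β ^ i k • d k)))
    (hmin : ∀ k j, j < i k → ¬ (F (x k) - F (x k + β ^ j • d k) ≥
      θ * (ℓ k (x k) - ℓ k (x k + β ^ j • d k))))
    (hα : ∀ k, α k = β ^ i k)
    (hstep : ∀ k, x (k + 1) = x k + α k • d k)
    -- Lipschitz Hessian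
    (L₂ : ℝ) (hL₂ : 0 < L₂) (hlip2 : ∀ y z, ‖hess y - hess z‖ ≤ L₂ * ‖y - z‖)
    -- Luo-Tseng error bound
    (κ ε : ℝ) (hκ : 0 < κ) (hε : 0 < ε)
    (hEB : ∀ y : E n, F y ≤ F (x 0) → r y ≤ ε → Metric.infDist y X ≤ κ * r y)
    (hρlt : ρ < 1) :
    ∃ k₀ : ℕ, ∀ k, k₀ ≤ k → α k = 1 :=
  stmt12_general f g f' hess prox hfconv hgrad hhess hgconv hprox F hF X hX hXne r hr L₁ hL₁ hlip θ
    ζ η c ρ β hθ hζ hη hc hρ hβ x xh μ H ℓ q rk d i α hrpos hμ hH hℓ hq hrk hinex1 hinex2 hd hdesc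
    hmin hα hstep L₂ hL₂ hlip2 κ ε hκ hε hEB hρlt
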